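/- Suppose (∏𝔞, <_J) is λ-directed for an ideal J on 𝔞, L is an ideal on a set 𝔟 ⊇ 𝔞, and there is a monotone map f ↦ f^𝔟 from (∏𝔞, ≤_J-mod-J_{<λ}) to (∏𝔟, ≤_L) such that every g ∈ ∏𝔟 is dominated everywhere by some f^𝔟. Then (∏𝔟, <_L) is λ-directed. -/

import Mathlib

open Cardinal Set

/-- We work with cardinals in the lowest universe. -/
abbrev Card : Type 1 := Cardinal.{0}

/-- The product `∏ 𝔟`: functions giving, for each cardinal in `𝔟`, an ordinal below it. -/
def prodSet (𝔟 : Set Card) : Set (Card → Ordinal) :=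
  {f | ∀ θ ∈ 𝔟, f θ < θ.ord}

/-- `f < g mod J` (on the index set `𝔟`). -/
def ltMod (𝔟 : Set Card) (J : Set (Set Card)) (f g : Card → Ordinal) : Prop :=
  {θ | θ ∈ 𝔟 ∧ g θ ≤ f θ} ∈ J

/-- `f ≤ g mod J` (on the index set `𝔟`). -/
def leMod (𝔟 : Set Card) (J : Set (Set Card)) (f g : Card → Ordinal) : Prop :=
  {θ | θ ∈ 𝔟 ∧ g θ < f θ} ∈ J

/-- `J` is an ideal of subsets of `𝔟`. -/
def IsIdealOn (𝔟 : Set Card) (J : Set (Set Card)) : Prop :=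
  (∀ A ∈ J, A ⊆ 𝔟) ∧ ∅ ∈ J ∧ (∀ A ∈ J, ∀ B ⊆ A, B ∈ J) ∧
    (∀ A ∈ J, ∀ B ∈ J, A ∪ B ∈ J)

/-- `D` is an ultrafilter on the set `𝔟`. -/
def IsUltrafilterOn (𝔟 : Set Card) (D : Set (Set Card)) : Prop :=
  (∀ A ∈ D, A ⊆ 𝔟) ∧ 𝔟 ∈ D ∧ ∅ ∉ D ∧
    (∀ A ∈ D, ∀ B, A ⊆ B → B ⊆ 𝔟 → B ∈ D) ∧
    (∀ A ∈ D, ∀ B ∈ D, A ∩ B ∈ D) ∧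
    (∀ A, A ⊆ 𝔟 → A ∈ D ∨ 𝔟 \ A ∈ D)

/-- The dual ideal of a filter `D` on `𝔟`. -/
def dualIdeal (𝔟 : Set Card) (D : Set (Set Card)) : Set (Set Card) :=
  {A | A ⊆ 𝔟 ∧ 𝔟 \ A ∈ D}

/-- `lam` is the true cofinality of `(∏ 𝔟, <_J)`: there is a `<_J`-increasing
sequence of length `lam` cofinal in `∏ 𝔟`. -/
def IsTcf (𝔟 : Set Card) (J : Set (Set Card)) (lam : Card) : Prop :=
  ∃ F : Ordinal → (Card → Ordinal),
    (∀ α < lam.ord, F α ∈ prodSet 𝔟) ∧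
    (∀ α β : Ordinal, α < β → β < lam.ord → ltMod 𝔟 J (F α) (F β)) ∧
    (∀ g ∈ prodSet 𝔟, ∃ α < lam.ord, ltMod 𝔟 J g (F α))

/-- `pcf 𝔟`: the set of possible cofinalities of ultraproducts of `𝔟`. -/
def pcf (𝔟 : Set Card) : Set Card :=
  {lam | ∃ D, IsUltrafilterOn 𝔟 D ∧ IsTcf 𝔟 (dualIdeal 𝔟 D) lam}

/-- The pcf ideal `J_{<μ}[𝔞] = {𝔟 ⊆ 𝔞 : max pcf 𝔟 < μ}`. -/
def Jlt (𝔞 : Set Card) (μ : Card) : Set (Set Card) :=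
  {𝔟 | 𝔟 ⊆ 𝔞 ∧ ∀ lam ∈ pcf 𝔟, lam < μ}

/-- `b` is a generating sequence for the pcf ideals of `𝔞`:
`J_{≤μ}[𝔞] = J_{<μ}[𝔞] + b μ` for every `μ ∈ pcf 𝔞`. -/
def IsGenerating (𝔞 : Set Card) (b : Card → Set Card) : Prop :=
  ∀ μ ∈ pcf 𝔞, b μ ⊆ 𝔞 ∧
    Jlt 𝔞 (Order.succ μ) = {c | c ⊆ 𝔞 ∧ c \ b μ ∈ Jlt 𝔞 μ}

/-- The ideal `J^pcf_{<lam}[𝔞]` on `pcf 𝔞` generated by the sets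
`pcf (b μ)` for `μ ∈ lam ∩ pcf 𝔞`. -/
def Jpcf (𝔞 : Set Card) (b : Card → Set Card) (lam : Card) :
    Set (Set Card) :=
  {c | c ⊆ pcf 𝔞 ∧ ∃ s : Finset Card,
    (↑s : Set Card) ⊆ pcf 𝔞 ∩ Set.Iio lam ∧ c ⊆ ⋃ μ ∈ s, pcf (b μ)}

/-- `J_*[𝔞]`: subsets of `𝔞` with no inaccessible accumulation point. -/
def Jstar (𝔞 : Set Card) : Set (Set Card) :=
  {𝔟 | 𝔟 ⊆ 𝔞 ∧ ∀ μ : Card, μ.IsInaccessible → sSup (𝔟 ∩ Set.Iio μ) < μ}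

/-- A system of cofinal sequences: for each `μ ∈ pcf 𝔞`, `⟨F μ α : α < μ⟩` is a
sequence in `∏ 𝔞`, `<_{J_{<μ}[𝔞]}`-increasing on `b μ`, with the covering
property `(∗)₀`: every `f ∈ ∏ 𝔞` satisfies `f ↾ b μ ≤ F μ α` for some `α < μ`. -/
def GoodSeq (𝔞 : Set Card) (b : Card → Set Card)
    (F : Card → Ordinal → Card → Ordinal) : Prop :=
  ∀ μ ∈ pcf 𝔞,
    (∀ α < μ.ord, F μ α ∈ prodSet 𝔞) ∧
    (∀ α β : Ordinal, α < β → β < μ.ord → ltMod (b μ) (Jlt 𝔞 μ) (F μ α) (F μ β)) ∧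
    (∀ f ∈ prodSet 𝔞, ∃ α < μ.ord, ∀ θ ∈ b μ, f θ ≤ F μ α θ)

open Classical in
/-- The lifting `f ↦ f^𝔟` of a function `f ∈ ∏ 𝔞` to `∏ 𝔟` (for `𝔞 ⊆ 𝔟 ⊆ pcf 𝔞`):
`f^𝔟 ↾ 𝔞 = f` and, for `θ ∉ 𝔞`,
`f^𝔟 θ = min {β : f ↾ b θ ≤ F θ β mod J_{<θ}[𝔞]}`. -/
noncomputable def liftFn (𝔞 : Set Card) (b : Card → Set Card)
    (F : Card → Ordinal → Card → Ordinal) (f : Card → Ordinal) :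
    Card → Ordinal :=
  fun θ => if θ ∈ 𝔞 then f θ
    else sInf {β : Ordinal | leMod (b θ) (Jlt 𝔞 θ) f (F θ β)}

/- Pick for each `g ∈ S` some `f_g ∈ ∏ 𝔞` with `g ≤ G f_g` everywhere, and by directedness a
`<_J`-bound `h` of these fewer than `λ` functions. Monotonicity gives `G f_g ≤_L G h`, so
`g ≤_L G h`, and `G h + 1` is a strict `<_L`-bound; it stays inside `∏ 𝔟` because `θ.ord` is a
limit ordinal for infinite `θ`. -/

section

variable {𝔟 : Set Card} {J : Set (Set Card)} {f g h : Card → Ordinal}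

theorem IsIdealOn.leMod_of_ltMod (hJ : IsIdealOn 𝔟 J) (hfg : ltMod 𝔟 J f g) :
    leMod 𝔟 J f g :=
  hJ.2.2.1 _ hfg _ fun _ hθ => ⟨hθ.1, hθ.2.le⟩

theorem IsIdealOn.leMod_of_le_of_leMod (hJ : IsIdealOn 𝔟 J) (hfg : ∀ θ ∈ 𝔟, f θ ≤ g θ)
    (hgh : leMod 𝔟 J g h) : leMod 𝔟 J f h :=
  hJ.2.2.1 _ hgh _ fun θ hθ => ⟨hθ.1, hθ.2.trans_le (hfg θ hθ.1)⟩

theorem ltMod_add_one_iff : ltMod 𝔟 J f (fun θ => g θ + 1) ↔ leMod 𝔟 J f g := by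
  simp only [ltMod, leMod, Order.add_one_le_iff]

theorem add_one_mem_prodSet (hinf : ∀ θ ∈ 𝔟, ℵ₀ ≤ θ) (hg : g ∈ prodSet 𝔟) :
    (fun θ => g θ + 1) ∈ prodSet 𝔟 := fun θ hθ => by
  simpa only [Order.succ_eq_add_one] using
    (Cardinal.isSuccLimit_ord (hinf θ hθ)).succ_lt (hg θ hθ)

end

theorem exists_leMod_lift_of_directed {𝔞 𝔟 : Set Card} {J L : Set (Set Card)} {lam : Card}
    (hJ : IsIdealOn 𝔞 J) (hL : IsIdealOn 𝔟 L)
    (hdir : ∀ S : Set (Card → Ordinal), S ⊆ prodSet 𝔞 → #↥S < Cardinal.lift.{1,0} lam →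
      ∃ g ∈ prodSet 𝔞, ∀ f ∈ S, ltMod 𝔞 J f g)
    {G : (Card → Ordinal) → Card → Ordinal}
    (hGmono : ∀ f₁ ∈ prodSet 𝔞, ∀ f₂ ∈ prodSet 𝔞,
      leMod 𝔞 J f₁ f₂ → leMod 𝔟 L (G f₁) (G f₂))
    (hGcov : ∀ g ∈ prodSet 𝔟, ∃ f ∈ prodSet 𝔞, ∀ θ ∈ 𝔟, g θ ≤ G f θ)
    {S : Set (Card → Ordinal)} (hS : S ⊆ prodSet 𝔟) (hcard : #↥S < Cardinal.lift.{1,0} lam) :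
    ∃ h ∈ prodSet 𝔞, ∀ g ∈ S, leMod 𝔟 L g (G h) := by
  choose φ hφ hφcov using fun g : S => hGcov g (hS g.2)
  obtain ⟨h, hh, hφh⟩ := hdir (range φ) (range_subset_iff.2 hφ)
    (mk_range_le.trans_lt hcard)
  refine ⟨h, hh, fun g hg => hL.leMod_of_le_of_leMod (hφcov ⟨g, hg⟩) ?_⟩
  exact hGmono _ (hφ _) _ hh (hJ.leMod_of_ltMod (hφh _ (mem_range_self _)))

theorem directed_of_lifting_general (𝔞 𝔟 : Set Card)
    (hinf : ∀ θ ∈ 𝔟, ℵ₀ ≤ θ)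
    (J L : Set (Set Card)) (hJ : IsIdealOn 𝔞 J) (hL : IsIdealOn 𝔟 L)
    (lam : Card)
    (hdir : ∀ S : Set (Card → Ordinal), S ⊆ prodSet 𝔞 → #↥S < Cardinal.lift.{1,0} lam →
      ∃ g ∈ prodSet 𝔞, ∀ f ∈ S, ltMod 𝔞 J f g)
    (G : (Card → Ordinal) → Card → Ordinal)
    (hGmem : ∀ f ∈ prodSet 𝔞, G f ∈ prodSet 𝔟)
    (hGmono : ∀ f₁ ∈ prodSet 𝔞, ∀ f₂ ∈ prodSet 𝔞,
      leMod 𝔞 J f₁ f₂ → leMod 𝔟 L (G f₁) (G f₂))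
    (hGcov : ∀ g ∈ prodSet 𝔟, ∃ f ∈ prodSet 𝔞, ∀ θ ∈ 𝔟, g θ ≤ G f θ) :
    ∀ S : Set (Card → Ordinal), S ⊆ prodSet 𝔟 → #↥S < Cardinal.lift.{1,0} lam →
      ∃ g ∈ prodSet 𝔟, ∀ f ∈ S, ltMod 𝔟 L f g := by
  intro S hS hcard
  obtain ⟨h, hh, hbound⟩ := exists_leMod_lift_of_directed hJ hL hdir hGmono hGcov hS hcard
  exact ⟨fun θ => G h θ + 1, add_one_mem_prodSet hinf (hGmem h hh),
    fun g hg => ltMod_add_one_iff.2 (hbound g hg)⟩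

/-- abstract form of Subfact 3.3C: if `(∏ 𝔞, <_J)` is
`λ`-directed and there is a monotone lifting `G : ∏ 𝔞 → ∏ 𝔟` under which every
`g ∈ ∏ 𝔟` is dominated everywhere, then `(∏ 𝔟, <_L)` is `λ`-directed. -/
theorem directed_of_lifting (𝔞 𝔟 : Set Card) (hab : 𝔞 ⊆ 𝔟)
    (hreg : ∀ θ ∈ 𝔟, θ.IsRegular) (hinf : ∀ θ ∈ 𝔟, ℵ₀ ≤ θ)
    (J L : Set (Set Card)) (hJ : IsIdealOn 𝔞 J) (hL : IsIdealOn 𝔟 L)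
    (lam : Card)
    (hdir : ∀ S : Set (Card → Ordinal), S ⊆ prodSet 𝔞 → #↥S < Cardinal.lift.{1,0} lam →
      ∃ g ∈ prodSet 𝔞, ∀ f ∈ S, ltMod 𝔞 J f g)
    (G : (Card → Ordinal) → Card → Ordinal)
    (hGmem : ∀ f ∈ prodSet 𝔞, G f ∈ prodSet 𝔟)
    (hGmono : ∀ f₁ ∈ prodSet 𝔞, ∀ f₂ ∈ prodSet 𝔞,
      leMod 𝔞 J f₁ f₂ → leMod 𝔟 L (G f₁) (G f₂))
    (hGcov : ∀ g ∈ prodSet 𝔟, ∃ f ∈ prodSet 𝔞, ∀ θ ∈ 𝔟, g θ ≤ G f θ) :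
    ∀ S : Set (Card → Ordinal), S ⊆ prodSet 𝔟 → #↥S < Cardinal.lift.{1,0} lam →
      ∃ g ∈ prodSet 𝔟, ∀ f ∈ S, ltMod 𝔟 L f g :=
  directed_of_lifting_general 𝔞 𝔟 hinf J L hJ hL lam hdir G hGmem hGmono hGcov
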